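/- Let a, b, c : Fin m → Bool with c(s) ∈ {a(s), b(s)} for all s. Then the minimum number of recombinations needed to inherit c from (a, b) equals the number of consecutive pairs (t_j, t_{j+1}) of heterozygous sites of the parent on which the alternation pattern of c differs from that of a, i.e., the number of j with (c(t_j) ≠ c(t_{j+1})) XOR (a(t_j) ≠ a(t_{j+1})), where t_1 < ... < t_r are the sites with a(t) ≠ b(t). -/

import Mathlib

/-- `σ` is a valid origin sequence for inheriting child haplotype `c` from parent
haplotypes `(a, b)`: origin `0` means the allele comes from `a`, origin `1` from `b`. -/
def IsValidOrigin {n : ℕ} (a b c : Fin (n + 1) → Bool) (σ : Fin (n + 1) → Fin 2) : Prop :=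
  ∀ s, (σ s = 0 → c s = a s) ∧ (σ s = 1 → c s = b s)

/-- Number of recombinations in the origin sequence `σ`. -/
def nRecomb {n : ℕ} (σ : Fin (n + 1) → Fin 2) : ℕ :=
  (Finset.univ.filter fun j : Fin n => σ j.castSucc ≠ σ j.succ).card

/-!
At a heterozygous site the origin is forced, and the forced origins of two consecutive
heterozygous sites differ exactly when the alternation patterns of `c` and `a` disagree there.
So the theorem is an instance of a statement about any sequence prescribed on a set of sites:
a sequence that takes two different prescribed values at consecutive sites must switch in between,
and these intervals are disjoint; conversely, carrying each prescribed value forward to the next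
prescribed site switches nowhere else.
-/

open Finset

section Interpolation

variable {n : ℕ} {α : Type*}

def switches [DecidableEq α] (f : Fin (n + 1) → α) : Finset (Fin n) :=
  univ.filter fun j => f j.castSucc ≠ f j.succ

def Consecutive (P : Fin (n + 1) → Prop) (p q : Fin (n + 1)) : Prop :=
  p < q ∧ P p ∧ P q ∧ ∀ u, p < u → u < q → ¬P u

theorem Consecutive.eq_of_overlap {P : Fin (n + 1) → Prop} {p q p' q' : Fin (n + 1)}
    (h : Consecutive P p q) (h' : Consecutive P p' q') (hp'q : p' < q) (hpq' : p < q') :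
    p = p' ∧ q = q' := by
  obtain ⟨-, hp, hq, hpq⟩ := h
  obtain ⟨-, hp', hq', hp'q'⟩ := h'
  refine ⟨le_antisymm ?_ ?_, le_antisymm ?_ ?_⟩
  · exact not_lt.1 fun hlt => hp'q' p hlt hpq' hp
  · exact not_lt.1 fun hlt => hpq p' hlt hp'q hp'
  · exact not_lt.1 fun hlt => hpq q' hpq' hlt hq'
  · exact not_lt.1 fun hlt => hp'q' q hp'q hlt hq

theorem exists_switch_of_ne [DecidableEq α] (f : Fin (n + 1) → α) {p q : Fin (n + 1)}
    (hpq : p ≤ q) (hne : f p ≠ f q) :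
    ∃ j ∈ switches f, p ≤ j.castSucc ∧ j.succ ≤ q := by
  induction q using Fin.induction with
  | zero => exact absurd (by rw [Fin.le_zero_iff.1 hpq]) hne
  | succ i ih =>
    have hpi : p ≤ i.castSucc :=
      Fin.le_castSucc_iff.2 (hpq.lt_of_ne fun h => hne (congrArg f h))
    by_cases hi : f i.castSucc = f i.succ
    · obtain ⟨j, hj, hpj, hji⟩ := ih hpi (hi ▸ hne)
      exact ⟨j, hj, hpj, hji.trans Fin.castSucc_lt_succ.le⟩
    · exact ⟨i, by simpa [switches] using hi, hpi, le_rfl⟩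

open Classical in
noncomputable def mismatchedGaps (P : Fin (n + 1) → Prop) (g : Fin (n + 1) → α) :
    Finset (Fin (n + 1) × Fin (n + 1)) :=
  univ.filter fun pq => Consecutive P pq.1 pq.2 ∧ g pq.1 ≠ g pq.2

theorem mem_mismatchedGaps {P : Fin (n + 1) → Prop} {g : Fin (n + 1) → α}
    {pq : Fin (n + 1) × Fin (n + 1)} :
    pq ∈ mismatchedGaps P g ↔ Consecutive P pq.1 pq.2 ∧ g pq.1 ≠ g pq.2 := by
  simp [mismatchedGaps]

theorem card_mismatchedGaps_le_card_switches [DecidableEq α] {P : Fin (n + 1) → Prop}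
    {f g : Fin (n + 1) → α} (hfg : ∀ s, P s → f s = g s) :
    #(mismatchedGaps P g) ≤ #(switches f) := by
  refine card_le_card_of_forall_subsingleton
    (fun pq j => pq.1 ≤ j.castSucc ∧ j.succ ≤ pq.2) (fun pq hpq => ?_) fun j _ => ?_
  · obtain ⟨hgap, hne⟩ := mem_mismatchedGaps.1 hpq
    refine exists_switch_of_ne f hgap.1.le ?_
    rwa [hfg _ hgap.2.1, hfg _ hgap.2.2.1]
  · rintro pq ⟨hpq, hpj, hjq⟩ pq' ⟨hpq', hp'j, hjq'⟩
    have hj := Fin.castSucc_lt_succ (i := j)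
    obtain ⟨h1, h2⟩ := (mem_mismatchedGaps.1 hpq).1.eq_of_overlap (mem_mismatchedGaps.1 hpq').1
      (hp'j.trans_lt (hj.trans_le hjq)) (hpj.trans_lt (hj.trans_le hjq'))
    exact Prod.ext h1 h2

variable (P : Fin (n + 1) → Prop) [DecidablePred P]

def fillForward (g : Fin (n + 1) → α) : Fin (n + 1) → α :=
  Fin.induction (if h : (univ.filter P).Nonempty then g ((univ.filter P).min' h) else g 0)
    fun j x => if P j.succ then g j.succ else x

variable {P}

theorem fillForward_of_prop {g : Fin (n + 1) → α} {s : Fin (n + 1)} (hs : P s) :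
    fillForward P g s = g s := by
  cases s using Fin.cases with
  | zero =>
    have hne : (univ.filter P).Nonempty := ⟨0, by simpa using hs⟩
    have hmin : (univ.filter P).min' hne = 0 :=
      Fin.le_zero_iff.1 (min'_le _ _ (by simpa using hs))
    simp [fillForward, hne, hmin]
  | succ j => simp [fillForward, hs]

theorem fillForward_succ_of_not_prop {g : Fin (n + 1) → α} {j : Fin n} (hj : ¬P j.succ) :
    fillForward P g j.succ = fillForward P g j.castSucc := by
  simp [fillForward, hj]

theorem fillForward_eq_or_exists_consecutive {g : Fin (n + 1) → α} {t q : Fin (n + 1)}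
    (hq : P q) (htq : t < q) (hgap : ∀ u, t < u → u < q → ¬P u) :
    fillForward P g t = g q ∨ ∃ p, Consecutive P p q ∧ fillForward P g t = g p := by
  induction t using Fin.induction with
  | zero =>
    by_cases h0 : P 0
    · exact .inr ⟨0, ⟨htq, h0, hq, hgap⟩, fillForward_of_prop h0⟩
    have hne : (univ.filter P).Nonempty := ⟨q, by simpa using hq⟩
    have hmin : (univ.filter P).min' hne = q := by
      refine le_antisymm (min'_le _ _ (by simpa using hq)) (not_lt.1 fun hlt => ?_)
      have hmem := min'_mem _ hne
      rw [mem_filter] at hmem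
      rcases (Fin.zero_le ((univ.filter P).min' hne)).eq_or_lt with hm | hm
      · exact h0 (hm ▸ hmem.2)
      · exact hgap _ hm hlt hmem.2
    left
    simp [fillForward, hne, hmin]
  | succ i ih =>
    by_cases hi : P i.succ
    · exact .inr ⟨_, ⟨htq, hi, hq, hgap⟩, fillForward_of_prop hi⟩
    rw [fillForward_succ_of_not_prop hi]
    refine ih (Fin.castSucc_lt_succ.trans htq) fun u hiu huq => ?_
    rcases (Fin.castSucc_lt_iff_succ_le.1 hiu).eq_or_lt with h | h
    · exact h ▸ hi
    · exact hgap u h huq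

theorem card_switches_fillForward_le [DecidableEq α] (g : Fin (n + 1) → α) :
    #(switches (fillForward P g)) ≤ #(mismatchedGaps P g) := by
  refine card_le_card_of_forall_subsingleton (fun j pq => pq.2 = j.succ)
    (fun j hj => ?_) fun pq _ => ?_
  · have hswitch : fillForward P g j.castSucc ≠ fillForward P g j.succ := by
      simpa [switches] using hj
    have hj : P j.succ := by
      by_contra h
      exact hswitch (fillForward_succ_of_not_prop h).symm
    rw [fillForward_of_prop hj] at hswitch
    obtain h | ⟨p, hp, hpj⟩ := fillForward_eq_or_exists_consecutive (g := g) hj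
      Fin.castSucc_lt_succ fun u h1 h2 => absurd (Fin.castSucc_lt_iff_succ_le.1 h1) (not_le.2 h2)
    · exact absurd h hswitch
    · exact ⟨(p, j.succ), mem_mismatchedGaps.2 ⟨hp, hpj ▸ hswitch⟩, rfl⟩
  · rintro j ⟨-, hj⟩ j' ⟨-, hj'⟩
    exact Fin.succ_injective _ (hj.symm.trans hj')

theorem isLeast_card_switches [DecidableEq α] (g : Fin (n + 1) → α) :
    IsLeast {k | ∃ f, (∀ s, P s → f s = g s) ∧ #(switches f) = k} #(mismatchedGaps P g) := by
  refine ⟨⟨fillForward P g, fun _ => fillForward_of_prop, ?_⟩, ?_⟩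
  · exact (card_switches_fillForward_le g).antisymm
      (card_mismatchedGaps_le_card_switches fun _ => fillForward_of_prop)
  · rintro _ ⟨f, hfg, rfl⟩
    exact card_mismatchedGaps_le_card_switches hfg

end Interpolation

section Origin

variable {n : ℕ}

def forcedOrigin (a c : Fin (n + 1) → Bool) (s : Fin (n + 1)) : Fin 2 :=
  if c s = a s then 0 else 1

theorem isValidOrigin_iff {a b c : Fin (n + 1) → Bool} (hc : ∀ s, c s = a s ∨ c s = b s)
    {σ : Fin (n + 1) → Fin 2} :
    IsValidOrigin a b c σ ↔ ∀ s, a s ≠ b s → σ s = forcedOrigin a c s := by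
  refine forall_congr' fun s => ?_
  have hcs := hc s
  unfold forcedOrigin
  generalize a s = x, b s = y, c s = z, σ s = i at *
  revert x y z i
  decide

theorem forcedOrigin_ne_iff {a b c : Fin (n + 1) → Bool} (hc : ∀ s, c s = a s ∨ c s = b s)
    {p q : Fin (n + 1)} (hp : a p ≠ b p) (hq : a q ≠ b q) :
    forcedOrigin a c p ≠ forcedOrigin a c q ↔ ¬((c p ≠ c q) ↔ (a p ≠ a q)) := by
  have hcp := hc p
  have hcq := hc q
  unfold forcedOrigin
  generalize a p = x, b p = y, c p = z, a q = x', b q = y', c q = z' at *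
  revert x y z x' y' z'
  decide

end Origin

/-- the minimum number of recombinations needed to inherit `c` from `(a, b)`
equals the number of pairs of consecutive heterozygous sites of the parent on which the
alternation pattern of `c` differs (XOR) from that of `a`. -/
theorem stmt13 (n : ℕ) (a b c : Fin (n + 1) → Bool)
    (hc : ∀ s, c s = a s ∨ c s = b s) :
    sInf {k | ∃ σ : Fin (n + 1) → Fin 2, IsValidOrigin a b c σ ∧ nRecomb σ = k} =
      (Finset.univ.filter fun pq : Fin (n + 1) × Fin (n + 1) =>
        pq.1 < pq.2 ∧ a pq.1 ≠ b pq.1 ∧ a pq.2 ≠ b pq.2 ∧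
        (∀ u, pq.1 < u → u < pq.2 → a u = b u) ∧
        ¬((c pq.1 ≠ c pq.2) ↔ (a pq.1 ≠ a pq.2))).card := by
  have hset : {k | ∃ σ : Fin (n + 1) → Fin 2, IsValidOrigin a b c σ ∧ nRecomb σ = k} =
      {k | ∃ σ, (∀ s, a s ≠ b s → σ s = forcedOrigin a c s) ∧ #(switches σ) = k} := by
    simp_rw [isValidOrigin_iff hc]
    rfl
  rw [hset, (isLeast_card_switches _).csInf_eq]
  congr 1
  ext ⟨p, q⟩
  rw [mem_mismatchedGaps, mem_filter]
  simp only [mem_univ, true_and, Consecutive, not_ne_iff, and_assoc]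
  exact and_congr_right fun _ => and_congr_right fun hp => and_congr_right fun hq =>
    and_congr_right fun _ => forcedOrigin_ne_iff hc hp hq
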